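/- arXiv:2502.02974 — 2 statements merged into one kernel-verified Lean document; each statement's English description precedes it below -/
import Mathlib

section
/- Let r/s be an irreducible fraction with r,s coprime positive integers, s ≥ 2, and suppose r/s has regular continued fraction r/s = [a_1,...,a_{2m}] with a_1 ≥ 0, a_i ≥ 1 for i ≥ 2. For a matrix A = [[r,v],[s,u]] in SL(2,ℤ) (so ru − sv = 1), A equals M(a_1,...,a_{2m}) = R^{a_1}L^{a_2}···R^{a_{2m-1}}L^{a_{2m}} if and only if 0 < u < s. -/
open Matrix

/-- `M a = R^{a 0} * L^{a 1} * R^{a 2} * ⋯` : the alternating product of powers of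
`R = !![1,1;0,1]` and `L = !![1,0;1,1]` determined by the exponents `a`. -/
def Mword {n : ℕ} (a : Fin n → ℕ) : Matrix (Fin 2) (Fin 2) ℤ :=
  ((List.finRange n).map fun i =>
    if i.val % 2 = 0 then (!![1, 1; 0, 1] : Matrix (Fin 2) (Fin 2) ℤ) ^ (a i)
    else (!![1, 0; 1, 1] : Matrix (Fin 2) (Fin 2) ℤ) ^ (a i)).prod

/-- The value of the regular continued fraction `[a_1, ..., a_k]`. -/
def cfVal : List ℤ → ℚ
  | [] => 0
  | [a] => (a : ℚ)
  | a :: l => (a : ℚ) + 1 / cfVal l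

/-! Write `M(a) = [[p, v₀], [q, u₀]]`. Two letters at a time, `R^x L^y` sends a column `(p, q)` to
`((1 + xy) p + x q, y p + q)`, and `((1 + xy) p + x q) / (y p + q) = x + 1 / (y + 1 / (p / q))`;
by induction on the word, `p / q = [a_1, …, a_{2m}]` and `0 ≤ v₀ < p`, `0 < u₀ ≤ q`.
Both `(r, s)` and `(p, q)` are coprime (each sits in a determinant-one matrix) with positive second
entry, so they coincide. Then `u₀ = s` would give `s ∣ 1`, so `0 < u₀ < s`; and the solutions of
`r u - s v = 1` are `(u₀ + k s, v₀ + k r)`, of which exactly one has `0 < u < s`. -/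

local notation "𝐑" => (!![1, 1; 0, 1] : Matrix (Fin 2) (Fin 2) ℤ)
local notation "𝐋" => (!![1, 0; 1, 1] : Matrix (Fin 2) (Fin 2) ℤ)

section AltProd

variable {α : Type*} [Monoid α]

def altProd (A B : α) : List ℕ → α
  | [] => 1
  | x :: t => A ^ x * altProd B A t

theorem altProd_cons_cons (A B : α) (x y : ℕ) (t : List ℕ) :
    altProd A B (x :: y :: t) = A ^ x * B ^ y * altProd A B t := by
  simp only [altProd, mul_assoc]

theorem prod_map_finRange_ite_eq_altProd (A B : α) {n : ℕ} (a : Fin n → ℕ) :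
    ((List.finRange n).map fun i => if i.val % 2 = 0 then A ^ a i else B ^ a i).prod =
      altProd A B (List.ofFn a) := by
  induction n generalizing A B with
  | zero => rfl
  | succ n ih =>
    rw [List.finRange_succ, List.map_cons, List.map_map, List.prod_cons, List.ofFn_succ, altProd,
      ← ih B A]
    congr 2
    refine List.map_congr_left fun i _ => ?_
    simp only [Function.comp_apply, Fin.val_succ]
    split_ifs <;> first | rfl | omega

end AltProd

theorem Mword_eq_altProd {n : ℕ} (a : Fin n → ℕ) : Mword a = altProd 𝐑 𝐋 (List.ofFn a) :=
  prod_map_finRange_ite_eq_altProd _ _ a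

theorem det_Mword {n : ℕ} (a : Fin n → ℕ) : (Mword a).det = 1 := by
  rw [Mword, ← coe_detMonoidHom, map_list_prod, List.map_map]
  refine List.prod_eq_one fun d hd => ?_
  obtain ⟨i, -, rfl⟩ := List.mem_map.mp hd
  simp only [Function.comp_apply, coe_detMonoidHom]
  split_ifs <;> simp [det_pow, det_fin_two_of]

theorem cfVal_cons (x : ℤ) (l : List ℤ) : cfVal (x :: l) = x + 1 / cfVal l := by
  cases l <;> simp [cfVal]

theorem R_pow (n : ℕ) : 𝐑 ^ n = !![1, (n : ℤ); 0, 1] := by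
  induction n with
  | zero => simp [one_fin_two]
  | succ n ih => rw [pow_succ, ih, mul_fin_two]; norm_num [add_comm]

theorem L_pow (n : ℕ) : 𝐋 ^ n = !![1, 0; (n : ℤ), 1] := by
  induction n with
  | zero => simp [one_fin_two]
  | succ n ih => rw [pow_succ, ih, mul_fin_two]; norm_num

theorem R_pow_mul_L_pow_mul (x y : ℕ) (M : Matrix (Fin 2) (Fin 2) ℤ) :
    𝐑 ^ x * 𝐋 ^ y * M =
      !![(1 + x * y) * M 0 0 + x * M 1 0, (1 + x * y) * M 0 1 + x * M 1 1;
        y * M 0 0 + M 1 0, y * M 0 1 + M 1 1] := by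
  rw [R_pow, L_pow]
  ext i j
  fin_cases i <;> fin_cases j <;> simp [mul_apply, Fin.sum_univ_two]

theorem ratio_R_pow_mul_L_pow_mul (x y : ℕ) (M : Matrix (Fin 2) (Fin 2) ℤ) (hy : 1 ≤ y)
    (hp : 0 < M 0 0) (hq : 0 ≤ M 1 0) :
    ((𝐑 ^ x * 𝐋 ^ y * M) 0 0 : ℚ) / (𝐑 ^ x * 𝐋 ^ y * M) 1 0 =
      x + 1 / (y + 1 / ((M 0 0 : ℚ) / M 1 0)) := by
  have hp' : (0 : ℚ) < M 0 0 := by exact_mod_cast hp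
  have hden : (0 : ℚ) < y * M 0 0 + M 1 0 := by
    have : (1 : ℚ) ≤ y := by exact_mod_cast hy
    have : (0 : ℚ) ≤ M 1 0 := by exact_mod_cast hq
    nlinarith
  rw [R_pow_mul_L_pow_mul, one_div_div]
  simp only [of_apply, cons_val', cons_val_zero, cons_val_one, empty_val', cons_val_fin_one]
  push_cast
  field_simp
  ring

def WordBounds (M : Matrix (Fin 2) (Fin 2) ℤ) : Prop :=
  0 ≤ M 0 1 ∧ M 0 1 < M 0 0 ∧ 0 < M 1 1 ∧ M 1 1 ≤ M 1 0

theorem wordBounds_R_pow_mul_L_pow (x y : ℕ) (hy : 1 ≤ y) : WordBounds (𝐑 ^ x * 𝐋 ^ y) := by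
  have h := R_pow_mul_L_pow_mul x y 1
  rw [mul_one] at h
  rw [WordBounds, h]
  simp only [of_apply, cons_val', cons_val_zero, cons_val_one, empty_val', cons_val_fin_one,
    one_apply_eq, one_apply_ne zero_ne_one, one_apply_ne one_ne_zero]
  have hy' : (1 : ℤ) ≤ y := by exact_mod_cast hy
  have hx : (0 : ℤ) ≤ x := by positivity
  refine ⟨by linarith, by nlinarith, by linarith, by linarith⟩

theorem WordBounds.R_pow_mul_L_pow_mul {M : Matrix (Fin 2) (Fin 2) ℤ} (hM : WordBounds M)
    (x y : ℕ) (hy : 1 ≤ y) : WordBounds (𝐑 ^ x * 𝐋 ^ y * M) := by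
  obtain ⟨hp', hp'p, hq', hq'q⟩ := hM
  rw [WordBounds, _root_.R_pow_mul_L_pow_mul]
  simp only [of_apply, cons_val', cons_val_zero, cons_val_one, empty_val', cons_val_fin_one]
  have hy' : (1 : ℤ) ≤ y := by exact_mod_cast hy
  have hx : (0 : ℤ) ≤ x := by positivity
  have hxy : (0 : ℤ) ≤ x * y := by positivity
  refine ⟨by positivity, ?_, by nlinarith, by nlinarith⟩
  nlinarith [mul_nonneg hxy (sub_nonneg.mpr hp'p.le), mul_nonneg hx (sub_nonneg.mpr hq'q)]

theorem wordBounds_altProd_and_ratio : ∀ l : List ℕ, Even l.length → l ≠ [] →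
    (∀ y ∈ l.tail, 1 ≤ y) →
    WordBounds (altProd 𝐑 𝐋 l) ∧
      ((altProd 𝐑 𝐋 l 0 0 : ℤ) : ℚ) / (altProd 𝐑 𝐋 l 1 0 : ℤ) = cfVal (l.map (↑))
  | [], _, hne, _ => absurd rfl hne
  | [_], heven, _, _ => absurd heven (by simp [Nat.even_add_one])
  | [_, _, _], heven, _, _ => absurd heven (by simp [Nat.even_add_one])
  | [x, y], _, _, hpos => by
    have hy : 1 ≤ y := hpos y (by simp)
    rw [altProd_cons_cons, altProd, mul_one]
    refine ⟨wordBounds_R_pow_mul_L_pow x y hy, ?_⟩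
    have h := ratio_R_pow_mul_L_pow_mul x y 1 hy (by simp) le_rfl
    rw [mul_one] at h
    -- the identity matrix stands for the empty tail: its ratio `1 / 0` and `cfVal []` are both `0`
    simp [h, cfVal_cons, cfVal]
  | x :: y :: z :: w :: t, heven, _, hpos => by
    have hy : 1 ≤ y := hpos y (by simp)
    obtain ⟨hM, hratio⟩ := wordBounds_altProd_and_ratio (z :: w :: t)
      (by simpa [Nat.even_add_one] using heven) (List.cons_ne_nil _ _)
      (fun v hv => hpos v (List.mem_cons_of_mem _ (List.mem_cons_of_mem _ hv)))
    rw [altProd_cons_cons]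
    refine ⟨hM.R_pow_mul_L_pow_mul x y hy, ?_⟩
    rw [ratio_R_pow_mul_L_pow_mul x y _ hy (hM.1.trans_lt hM.2.1) (hM.2.2.1.le.trans hM.2.2.2),
      hratio]
    simp only [List.map_cons, cfVal_cons, Int.cast_natCast]

theorem natAbs_coprime_of_mul_sub_mul_eq_one {r s u v : ℤ} (h : r * u - s * v = 1) :
    r.natAbs.Coprime s.natAbs :=
  Int.isCoprime_iff_gcd_eq_one.mp ⟨u, -v, by linear_combination h⟩

theorem lt_of_mul_sub_mul_eq_one {r s u v : ℤ} (h : r * u - s * v = 1) (hs : 2 ≤ s)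
    (hus : u ≤ s) : u < s := by
  refine lt_of_le_of_ne hus ?_
  rintro rfl
  have := Int.eq_one_of_mul_eq_one_right (by omega) (show u * (r - v) = 1 by linear_combination h)
  omega

theorem eq_of_mul_sub_mul_eq_one {r s u v u' v' : ℤ} (h : r * u - s * v = 1)
    (h' : r * u' - s * v' = 1) (hu : 0 ≤ u) (hus : u < s) (hu' : 0 ≤ u') (hu's : u' < s) :
    u = u' ∧ v = v' := by
  have hcop : IsCoprime s r := ⟨-v, u, by linear_combination h⟩
  have hdvd : s ∣ u - u' := hcop.dvd_of_dvd_mul_left ⟨v - v', by linear_combination h - h'⟩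
  have huu' : u = u' := by
    have := Int.eq_zero_of_abs_lt_dvd hdvd (abs_lt.mpr ⟨by linarith, by linarith⟩)
    linarith
  subst huu'
  refine ⟨rfl, mul_left_cancel₀ (by omega : s ≠ 0) ?_⟩
  linear_combination h' - h

theorem fin_two_eq_iff_of_det_eq_one {M : Matrix (Fin 2) (Fin 2) ℤ} (hM : M.det = 1)
    (hM₁₁ : 0 < M 1 1) (hM₁₁' : M 1 1 < M 1 0) {u v : ℤ} (h : M 0 0 * u - M 1 0 * v = 1) :
    !![M 0 0, v; M 1 0, u] = M ↔ 0 < u ∧ u < M 1 0 := by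
  rw [det_fin_two] at hM
  simp only [← Matrix.ext_iff, Fin.forall_fin_two, of_apply, cons_val', cons_val_zero,
    cons_val_one, empty_val', cons_val_fin_one, true_and]
  constructor
  · rintro ⟨rfl, rfl⟩
    exact ⟨hM₁₁, hM₁₁'⟩
  · rintro ⟨hu, hu'⟩
    exact (eq_of_mul_sub_mul_eq_one h (by linear_combination hM) hu.le hu' hM₁₁.le hM₁₁').symm

theorem forall_mem_tail_ofFn {α : Type*} {n : ℕ} (a : Fin n → α) {p : α → Prop}
    (ha : ∀ i : Fin n, 1 ≤ i.val → p (a i)) : ∀ y ∈ (List.ofFn a).tail, p y := by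
  intro y hy
  obtain ⟨j, hj, rfl⟩ := List.mem_iff_getElem.mp hy
  simp only [List.getElem_tail, List.getElem_ofFn]
  exact ha _ (by simp)

theorem Mword_iff_reduced_general {m : ℕ} (hm : 1 ≤ m) (a : Fin (2 * m) → ℕ)
    (ha : ∀ i, 1 ≤ i.val → 1 ≤ a i)
    (r s v u : ℤ) (hs : 2 ≤ s)
    (hdet : r * u - s * v = 1)
    (hcf : (r : ℚ) / s = cfVal ((List.finRange (2 * m)).map fun i => (a i : ℤ))) :
    (!![r, v; s, u] : Matrix (Fin 2) (Fin 2) ℤ) = Mword a ↔ 0 < u ∧ u < s := by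
  obtain ⟨⟨-, -, hu₀, hu₀s⟩, hratio⟩ := wordBounds_altProd_and_ratio (List.ofFn a)
    (by simp) (by simp; omega) (forall_mem_tail_ofFn a ha)
  rw [← Mword_eq_altProd] at hu₀ hu₀s hratio
  set M := Mword a
  have hMdet : M 0 0 * M 1 1 - M 1 0 * M 0 1 = 1 := by
    have h := det_Mword a
    rw [det_fin_two] at h
    linear_combination h
  obtain ⟨rfl, rfl⟩ : r = M 0 0 ∧ s = M 1 0 :=
    Rat.div_int_inj (by omega) (by omega) (natAbs_coprime_of_mul_sub_mul_eq_one hdet)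
      (natAbs_coprime_of_mul_sub_mul_eq_one hMdet)
      (by rw [hcf, hratio, List.map_ofFn, List.ofFn_eq_map]; rfl)
  exact fin_two_eq_iff_of_det_eq_one (det_Mword a) hu₀
    (lt_of_mul_sub_mul_eq_one hMdet hs hu₀s) hdet

theorem Mword_iff_reduced {m : ℕ} (hm : 1 ≤ m) (a : Fin (2 * m) → ℕ)
    (ha : ∀ i, 1 ≤ i.val → 1 ≤ a i)
    (r s v u : ℤ) (hr : 0 < r) (hs : 2 ≤ s) (hcop : IsCoprime r s)
    (hdet : r * u - s * v = 1)
    (hcf : (r : ℚ) / s = cfVal ((List.finRange (2 * m)).map fun i => (a i : ℤ))) :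
    (!![r, v; s, u] : Matrix (Fin 2) (Fin 2) ℤ) = Mword a ↔ 0 < u ∧ u < s :=
  Mword_iff_reduced_general hm a ha r s v u hs hdet hcf
end

section
/- Let r/s and r'/s be irreducible fractions with s ≥ 1 and r + r' ≡ 0 (mod s), with 1 ≤ n < r/s < r'/s < n+1 for some integer n. If r/s = [n, a_2, ..., a_k] as a regular continued fraction, then a_2 ≥ 2 and r'/s = [n, 1, a_2 − 1, a_3, ..., a_k]. -/
theorem add_eq_two_mul_add_one_of_mem_Ioo {K : Type*} [Field K] [LinearOrder K]
    [IsStrictOrderedRing K] {x x' : K} {n m : ℤ} (hm : x + x' = m)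
    (hx : (n : K) < x) (hxx' : x < x') (hx' : x' < n + 1) : m = 2 * n + 1 := by
  have hlow : ((2 * n : ℤ) : K) < m := by push_cast; linarith
  have hhigh : (m : K) < ((2 * n + 2 : ℤ) : K) := by push_cast; linarith
  have := Int.cast_lt.mp hlow
  have := Int.cast_lt.mp hhigh
  omega

theorem cfVal_cons_cons (a b : ℤ) (l : List ℤ) :
    cfVal (a :: b :: l) = a + 1 / cfVal (b :: l) := rfl

theorem one_le_cfVal_cons (a : ℤ) (l : List ℤ) (h : ∀ x ∈ a :: l, 1 ≤ x) :
    1 ≤ cfVal (a :: l) := by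
  induction l generalizing a with
  | nil => exact (Int.cast_le (R := ℚ)).mpr (h a (List.mem_singleton_self a))
  | cons b l ih =>
    have hb : 1 ≤ cfVal (b :: l) := ih b fun x hx => h x (List.mem_cons_of_mem a hx)
    have ha : (1 : ℚ) ≤ a := by exact_mod_cast h a (by simp)
    rw [cfVal_cons_cons]
    have : 0 < 1 / cfVal (b :: l) := by positivity
    linarith

theorem cfVal_cons_le (a : ℤ) (l : List ℤ) (h : ∀ x ∈ l, 1 ≤ x) :
    cfVal (a :: l) ≤ a + 1 := by
  cases l with
  | nil => simp [cfVal]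
  | cons b l =>
    have hb : 1 ≤ cfVal (b :: l) := one_le_cfVal_cons b l h
    rw [cfVal_cons_cons]
    linarith [(div_le_one (by linarith)).mpr hb]

theorem cfVal_sub_one_cons (a : ℤ) (l : List ℤ) :
    cfVal ((a - 1) :: l) = cfVal (a :: l) - 1 := by
  cases l <;> simp only [cfVal] <;> push_cast <;> ring

theorem cfVal_cons_one_cons_sub_one (a b : ℤ) (l : List ℤ) (h : 1 < cfVal (b :: l)) :
    cfVal (a :: 1 :: (b - 1) :: l) = 2 * a + 1 - cfVal (a :: b :: l) := by
  rw [cfVal_cons_cons, cfVal_cons_cons, cfVal_sub_one_cons, cfVal_cons_cons]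
  generalize cfVal (b :: l) = y at h ⊢
  have hy : y - 1 ≠ 0 := by linarith
  have hy' : y ≠ 0 := by linarith
  push_cast
  rw [one_add_div hy, sub_add_cancel, one_div_div]
  field_simp
  ring

theorem cf_of_complement_general (r r' s n a₂ : ℤ) (rest : List ℤ)
    (hs : 1 ≤ s)
    (hsum : (s : ℤ) ∣ (r + r'))
    (h1 : (n : ℚ) < (r : ℚ) / s) (h2 : (r : ℚ) / s < (r' : ℚ) / s)
    (h3 : (r' : ℚ) / s < (n : ℚ) + 1)
    (hpos : 1 ≤ a₂) (hrest : ∀ x ∈ rest, 1 ≤ x)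
    (hcf : (r : ℚ) / s = cfVal (n :: a₂ :: rest)) :
    2 ≤ a₂ ∧ (r' : ℚ) / s = cfVal (n :: 1 :: (a₂ - 1) :: rest) := by
  obtain ⟨m, hm⟩ := hsum
  have hmQ : (r : ℚ) / s + r' / s = m := by
    have hs0 : (s : ℚ) ≠ 0 := by exact_mod_cast (by omega : s ≠ 0)
    rw [← add_div, div_eq_iff hs0, mul_comm]
    exact_mod_cast hm
  have hcompl : (r' : ℚ) / s = 2 * n + 1 - r / s := by
    have := add_eq_two_mul_add_one_of_mem_Ioo hmQ h1 h2 h3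
    subst this
    push_cast at hmQ
    linarith
  set y := cfVal (a₂ :: rest)
  have hy1 : 1 ≤ y := one_le_cfVal_cons a₂ rest (by simpa [hpos] using hrest)
  have hy2 : 2 < y := by
    have hinv : 1 / y < 1 / 2 := by
      rw [cfVal_cons_cons] at hcf
      linarith
    by_contra! hy
    linarith [one_div_le_one_div_of_le (by linarith) hy]
  have ha₂ : (1 : ℚ) < a₂ := by linarith [cfVal_cons_le a₂ rest hrest]
  refine ⟨by exact_mod_cast ha₂, ?_⟩
  rw [cfVal_cons_one_cons_sub_one n a₂ rest (by linarith), hcompl, hcf]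

theorem cf_of_complement (r r' s n a₂ : ℤ) (rest : List ℤ)
    (hs : 1 ≤ s) (hcop : IsCoprime r s) (hcop' : IsCoprime r' s)
    (hsum : (s : ℤ) ∣ (r + r'))
    (hn : 1 ≤ n)
    (h1 : (n : ℚ) < (r : ℚ) / s) (h2 : (r : ℚ) / s < (r' : ℚ) / s)
    (h3 : (r' : ℚ) / s < (n : ℚ) + 1)
    (hpos : 1 ≤ a₂) (hrest : ∀ x ∈ rest, 1 ≤ x)
    (hcf : (r : ℚ) / s = cfVal (n :: a₂ :: rest)) :
    2 ≤ a₂ ∧ (r' : ℚ) / s = cfVal (n :: 1 :: (a₂ - 1) :: rest) :=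
  cf_of_complement_general r r' s n a₂ rest hs hsum h1 h2 h3 hpos hrest hcf
end
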